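/- Let d ≥ 3, 𝒜 ∈ ℝ^{n₁×⋯×n_d}, and 0 ≤ ω_j < 1/√n_j for each j. If (x₁^{ω₁},…,x_d^{ω_d}) is the output of the max-row-based algorithm (Algorithm V2), then ⟨𝒜, x₁^{ω₁}∘⋯∘x_d^{ω_d}⟩ ≥ (∏_{j=1}^d (1 − ω_j√n_j + ω_j) / sqrt(∏_{j=1}^{d−1} n_j)) · ‖𝒜‖_F ≥ (∏_{j=1}^d (1 − ω_j√n_j + ω_j) / sqrt(∏_{j=1}^{d−1} n_j)) · ⟨𝒜, x̃₁∘⋯∘x̃_d⟩ for any unit vectors x̃_j. -/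

import Mathlib

/-- Euclidean (ℓ2) norm. -/
noncomputable def n2 {α : Type*} [Fintype α] (x : α → ℝ) : ℝ :=
  Real.sqrt (∑ i, x i ^ 2)

/-- ℓ1 norm. -/
noncomputable def n1 {α : Type*} [Fintype α] (x : α → ℝ) : ℝ :=
  ∑ i, |x i|

/-- Entrywise soft-thresholding. -/
noncomputable def st {α : Type*} [Fintype α] (a : α → ℝ) (ω : ℝ) : α → ℝ :=
  fun i => Real.sign (a i) * max (|a i| - ω) 0

/-- Multi-indices of the modes strictly before mode `j`. -/
abbrev Lt {d : ℕ} (n : Fin d → ℕ) (j : Fin d) :=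
  (k : {k : Fin d // k.val < j.val}) → Fin (n k)

/-- Multi-indices of the modes strictly after mode `j`. -/
abbrev Gt {d : ℕ} (n : Fin d → ℕ) (j : Fin d) :=
  (k : {k : Fin d // j.val < k.val}) → Fin (n k)

/-- Assemble a full multi-index from a prefix `I`, a mode-`j` index `i` and a suffix `J`. -/
def glue {d : ℕ} {n : Fin d → ℕ} (j : Fin d) (I : Lt n j) (i : Fin (n j)) (J : Gt n j) :
    (k : Fin d) → Fin (n k) := fun k =>
  if h : k.val < j.val then I ⟨k, h⟩
  else if h' : j.val < k.val then J ⟨k, h'⟩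
  else
    cast (congrArg (fun t => Fin (n t))
      (Fin.ext (le_antisymm (not_lt.mp h) (not_lt.mp h')) : j = k)) i

/-- The `j`-th matrix `A_j` of the multilinear-relaxation algorithms: the mode-`j`
unfolding of the tensor `𝒜` contracted with the vectors `x k` for all modes `k < j`. -/
noncomputable def Mj {d : ℕ} {n : Fin d → ℕ} (A : ((k : Fin d) → Fin (n k)) → ℝ)
    (x : (k : Fin d) → Fin (n k) → ℝ) (j : Fin d) :
    Matrix (Fin (n j)) (Gt n j) ℝ :=
  Matrix.of fun i J =>
    ∑ I : Lt n j, A (glue j I i J) * ∏ k : {k : Fin d // k.val < j.val}, x k (I k)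

variable {α : Type*} [Fintype α]

lemma n2_nonneg (x : α → ℝ) : 0 ≤ n2 x := Real.sqrt_nonneg _

lemma n2_sq (x : α → ℝ) : n2 x ^ 2 = ∑ i, x i ^ 2 :=
  Real.sq_sqrt (Finset.sum_nonneg fun i _ => sq_nonneg _)

lemma n2_eq_zero {x : α → ℝ} : n2 x = 0 ↔ x = 0 := by
  constructor
  · intro h
    have h2 : ∑ i, x i ^ 2 = 0 := by
      have := n2_sq x; rw [h] at this; simpa using this.symm
    funext i
    have := (Finset.sum_eq_zero_iff_of_nonneg (fun i _ => sq_nonneg (x i))).mp h2 i (Finset.mem_univ i)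
    exact pow_eq_zero_iff (by norm_num) |>.mp this
  · rintro rfl; simp [n2]

lemma abs_le_n2 (x : α → ℝ) (i : α) : |x i| ≤ n2 x := by
  rw [← Real.sqrt_sq_eq_abs]
  exact Real.sqrt_le_sqrt (Finset.single_le_sum (f := fun i => x i ^ 2) (fun i _ => sq_nonneg _) (Finset.mem_univ i))

lemma cs (f g : α → ℝ) : ∑ i, f i * g i ≤ n2 f * n2 g := by
  have h := Finset.sum_mul_sq_le_sq_mul_sq Finset.univ f g
  have h2 : n2 f * n2 g = Real.sqrt ((∑ i, f i ^ 2) * (∑ i, g i ^ 2)) := by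
    rw [n2, n2, Real.sqrt_mul (Finset.sum_nonneg fun i _ => sq_nonneg _)]
  rw [h2]
  calc ∑ i, f i * g i ≤ |∑ i, f i * g i| := le_abs_self _
    _ = Real.sqrt ((∑ i, f i * g i) ^ 2) := (Real.sqrt_sq_eq_abs _).symm
    _ ≤ _ := Real.sqrt_le_sqrt h

lemma n2_le_n1 (x : α → ℝ) : n2 x ≤ n1 x := by
  rw [n2, n1]
  rw [← Real.sqrt_sq (Finset.sum_nonneg fun i _ => abs_nonneg (x i))]
  apply Real.sqrt_le_sqrt
  calc ∑ i, x i ^ 2 = ∑ i, |x i| * |x i| := by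
        apply Finset.sum_congr rfl; intro i _; rw [← sq_abs, sq]
    _ ≤ ∑ i, |x i| * (∑ j, |x j|) := by
        apply Finset.sum_le_sum; intro i _
        exact mul_le_mul_of_nonneg_left (Finset.single_le_sum (fun j _ => abs_nonneg (x j)) (Finset.mem_univ i)) (abs_nonneg _)
    _ = (∑ i, |x i|) ^ 2 := by rw [← Finset.sum_mul, sq]

lemma n2_smul (c : ℝ) (x : α → ℝ) : n2 (fun i => c * x i) = |c| * n2 x := by
  rw [n2, n2, ← Real.sqrt_sq_eq_abs, ← Real.sqrt_mul (sq_nonneg c), Finset.mul_sum]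
  congr 1
  exact Finset.sum_congr rfl fun i _ => by ring




section Idx
variable {d : ℕ} {n : Fin d → ℕ}

lemma glue_lt {j : Fin d} (I : Lt n j) (i : Fin (n j)) (J : Gt n j) {k : Fin d}
    (h : k.val < j.val) : glue j I i J k = I ⟨k, h⟩ := by
  simp only [glue, dif_pos h]

lemma glue_gt {j : Fin d} (I : Lt n j) (i : Fin (n j)) (J : Gt n j) {k : Fin d}
    (h : j.val < k.val) : glue j I i J k = J ⟨k, h⟩ := by
  simp only [glue, dif_neg (by omega : ¬ k.val < j.val), dif_pos h]

lemma glue_self {j : Fin d} (I : Lt n j) (i : Fin (n j)) (J : Gt n j) :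
    glue j I i J j = i := by
  simp only [glue, dif_neg (lt_irrefl j.val)]
  exact eq_of_heq (cast_heq _ _)

def gtEquiv (j j' : Fin d) (h : j.val + 1 = j'.val) : Fin (n j') × Gt n j' ≃ Gt n j where
  toFun p := fun k =>
    if hk : j'.val < k.1.val then p.2 ⟨k.1, hk⟩ else
      cast (congrArg (fun t => Fin (n t))
        (Fin.ext (show j'.val = k.1.val by have := k.2; omega) : j' = k.1)) p.1
  invFun J := (J ⟨j', by omega⟩, fun k => J ⟨k.1, by have := k.2; omega⟩)
  right_inv := by
    intro J; funext k; obtain ⟨k, hk⟩ := k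
    dsimp only
    by_cases h2 : j'.val < k.val
    · rw [dif_pos h2]
    · rw [dif_neg h2]
      have hjk : j' = k := Fin.ext (by omega)
      subst hjk
      exact eq_of_heq (cast_heq _ _)
  left_inv := by
    rintro ⟨i', J'⟩
    refine Prod.ext ?_ ?_
    · dsimp only
      rw [dif_neg (lt_irrefl j'.val)]
      exact eq_of_heq (cast_heq _ _)
    · funext k; obtain ⟨k, hk⟩ := k; dsimp only
      rw [dif_pos hk]

lemma gtEquiv_gt {j j' : Fin d} (h : j.val + 1 = j'.val) (i' : Fin (n j')) (J' : Gt n j')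
    (k : {k : Fin d // j'.val < k.val}) :
    gtEquiv (n := n) j j' h (i', J') ⟨k.1, by have := k.2; omega⟩ = J' k := by
  obtain ⟨k, hk⟩ := k
  simp only [gtEquiv, Equiv.coe_fn_mk, dif_pos hk]

lemma gtEquiv_self {j j' : Fin d} (h : j.val + 1 = j'.val) (i' : Fin (n j')) (J' : Gt n j') :
    gtEquiv (n := n) j j' h (i', J') ⟨j', by omega⟩ = i' := by
  simp only [gtEquiv, Equiv.coe_fn_mk, dif_neg (lt_irrefl j'.val)]
  exact eq_of_heq (cast_heq _ _)

def ltEquiv (j j' : Fin d) (h : j.val + 1 = j'.val) : Lt n j × Fin (n j) ≃ Lt n j' where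
  toFun p := fun k =>
    if hk : k.1.val < j.val then p.1 ⟨k.1, hk⟩ else
      cast (congrArg (fun t => Fin (n t))
        (Fin.ext (show j.val = k.1.val by have := k.2; omega) : j = k.1)) p.2
  invFun I' := (fun k => I' ⟨k.1, by have := k.2; omega⟩, I' ⟨j, by omega⟩)
  left_inv := by
    rintro ⟨I, i⟩
    refine Prod.ext ?_ ?_
    · funext k; obtain ⟨k, hk⟩ := k; dsimp only
      rw [dif_pos hk]
    · dsimp only
      rw [dif_neg (lt_irrefl j.val)]
      exact eq_of_heq (cast_heq _ _)
  right_inv := by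
    intro I'; funext k; obtain ⟨k, hk⟩ := k
    dsimp only
    by_cases h2 : k.val < j.val
    · rw [dif_pos h2]
    · rw [dif_neg h2]
      have hjk : j = k := Fin.ext (by omega)
      subst hjk
      exact eq_of_heq (cast_heq _ _)

lemma ltEquiv_lt {j j' : Fin d} (h : j.val + 1 = j'.val) (I : Lt n j) (i : Fin (n j))
    (k : {k : Fin d // k.val < j.val}) :
    ltEquiv (n := n) j j' h (I, i) ⟨k.1, by have := k.2; omega⟩ = I k := by
  obtain ⟨k, hk⟩ := k
  simp only [ltEquiv, Equiv.coe_fn_mk, dif_pos hk]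

lemma ltEquiv_self {j j' : Fin d} (h : j.val + 1 = j'.val) (I : Lt n j) (i : Fin (n j)) :
    ltEquiv (n := n) j j' h (I, i) ⟨j, by omega⟩ = i := by
  simp only [ltEquiv, Equiv.coe_fn_mk, dif_neg (lt_irrefl j.val)]
  exact eq_of_heq (cast_heq _ _)

lemma glue_comp {j j' : Fin d} (h : j.val + 1 = j'.val) (I : Lt n j) (i : Fin (n j))
    (i' : Fin (n j')) (J' : Gt n j') :
    glue j' (ltEquiv j j' h (I, i)) i' J' = glue j I i (gtEquiv j j' h (i', J')) := by
  funext k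
  rcases lt_trichotomy k.val j.val with hk | hk | hk
  · rw [glue_lt _ _ _ (by omega : k.val < j'.val), glue_lt _ _ _ hk]
    exact ltEquiv_lt h I i ⟨k, hk⟩
  · have : j = k := Fin.ext hk.symm
    subst this
    rw [glue_lt _ _ _ (by omega : j.val < j'.val), glue_self]
    exact ltEquiv_self h I i
  · rcases lt_trichotomy k.val j'.val with hk' | hk' | hk'
    · omega
    · have : j' = k := Fin.ext hk'.symm
      subst this
      rw [glue_self, glue_gt _ _ _ (by omega : j.val < j'.val)]
      exact (gtEquiv_self h i' J').symm
    · rw [glue_gt _ _ _ (by omega : j'.val < k.val), glue_gt _ _ _ hk]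
      exact (gtEquiv_gt h i' J' ⟨k, hk'⟩).symm

section Idx2
variable {d : ℕ} {n : Fin d → ℕ}

/-- Splitting `{k < j+1}` as `{k < j} ⊕ {j}`. -/
def ltProdEquiv (j j' : Fin d) (h : j.val + 1 = j'.val) :
    {k : Fin d // k.val < j.val} ⊕ Unit ≃ {k : Fin d // k.val < j'.val} where
  toFun s := Sum.elim (fun k => ⟨k.1, by have := k.2; omega⟩) (fun _ => ⟨j, by omega⟩) s
  invFun k := if hk : k.1.val < j.val then .inl ⟨k.1, hk⟩ else .inr ()
  left_inv := by
    rintro (k | u)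
    · dsimp only [Sum.elim_inl]
      rw [dif_pos k.2]
    · dsimp only [Sum.elim_inr]
      rw [dif_neg (lt_irrefl j.val)]
  right_inv := by
    rintro ⟨k, hk2⟩
    dsimp only
    by_cases hk : k.val < j.val
    · rw [dif_pos hk]
      rfl
    · rw [dif_neg hk]
      have : j = k := Fin.ext (by omega)
      subst this
      rfl

lemma prod_lt_split {M : Type*} [CommMonoid M] (j j' : Fin d) (h : j.val + 1 = j'.val)
    (g : {k : Fin d // k.val < j'.val} → M) :
    ∏ k, g k = (∏ k : {k : Fin d // k.val < j.val}, g ⟨k.1, by have := k.2; omega⟩) *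
      g ⟨j, by omega⟩ := by
  rw [← Equiv.prod_comp (ltProdEquiv j j' h) g, Fintype.prod_sum_type]
  simp [ltProdEquiv]

lemma sum_gt_split (j j' : Fin d) (h : j.val + 1 = j'.val) (f : Gt n j → ℝ) :
    ∑ J, f J = ∑ i' : Fin (n j'), ∑ J' : Gt n j', f (gtEquiv j j' h (i', J')) := by
  rw [← Equiv.sum_comp (gtEquiv (n := n) j j' h) f, Fintype.sum_prod_type]

lemma sum_lt_split (j j' : Fin d) (h : j.val + 1 = j'.val) (f : Lt n j' → ℝ) :
    ∑ I', f I' = ∑ I : Lt n j, ∑ i : Fin (n j), f (ltEquiv j j' h (I, i)) := by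
  rw [← Equiv.sum_comp (ltEquiv (n := n) j j' h) f, Fintype.sum_prod_type]

/-- The recursion for the matrices of the algorithm. -/
lemma Mj_succ (A : ((k : Fin d) → Fin (n k)) → ℝ) (x : (k : Fin d) → Fin (n k) → ℝ)
    (j j' : Fin d) (h : j.val + 1 = j'.val) (i' : Fin (n j')) (J' : Gt n j') :
    Mj A x j' i' J' =
      ∑ i : Fin (n j), x j i * Mj A x j i (gtEquiv j j' h (i', J')) := by
  unfold Mj
  simp only [Matrix.of_apply]
  rw [sum_lt_split j j' h]
  rw [Finset.sum_comm]
  apply Finset.sum_congr rfl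
  intro i _
  rw [Finset.mul_sum]
  apply Finset.sum_congr rfl
  intro I _
  rw [glue_comp h I i i' J']
  rw [prod_lt_split j j' h (fun k => x k.1 (ltEquiv j j' h (I, i) k))]
  have h1 : ∀ k : {k : Fin d // k.val < j.val},
      ltEquiv (n := n) j j' h (I, i) ⟨k.1, by have := k.2; omega⟩ = I k :=
    fun k => ltEquiv_lt h I i k
  have h2 : ltEquiv (n := n) j j' h (I, i) ⟨j, by omega⟩ = i := ltEquiv_self h I i
  rw [h2, Finset.prod_congr rfl (fun k _ => congrArg (x k.1) (h1 k))]
  ring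

end Idx2
section Idx3
variable {d : ℕ} {n : Fin d → ℕ}

def fullEquiv (j : Fin d) : Lt n j × Fin (n j) × Gt n j ≃ ((k : Fin d) → Fin (n k)) where
  toFun t := glue j t.1 t.2.1 t.2.2
  invFun f := (fun k => f k.1, f j, fun k => f k.1)
  left_inv := by
    rintro ⟨I, i, J⟩
    refine Prod.ext ?_ (Prod.ext ?_ ?_)
    · funext k; obtain ⟨k, hk⟩ := k
      exact glue_lt I i J hk
    · exact glue_self I i J
    · funext k; obtain ⟨k, hk⟩ := k
      exact glue_gt I i J hk
  right_inv := by
    intro f; funext k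
    dsimp only
    rcases lt_trichotomy k.val j.val with hk | hk | hk
    · rw [glue_lt _ _ _ hk]
    · have : j = k := Fin.ext hk.symm
      subst this
      rw [glue_self]
    · rw [glue_gt _ _ _ hk]

lemma sum_full (j : Fin d) (F : ((k : Fin d) → Fin (n k)) → ℝ) :
    ∑ f, F f = ∑ I : Lt n j, ∑ i, ∑ J, F (glue j I i J) := by
  rw [← Equiv.sum_comp (fullEquiv (n := n) j) F, Fintype.sum_prod_type]
  apply Finset.sum_congr rfl
  intro I _
  rw [Fintype.sum_prod_type]
  simp [fullEquiv]

def topEquiv (j : Fin d) (hj : j.val + 1 = d) :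
    {k : Fin d // k.val < j.val} ⊕ Unit ≃ Fin d where
  toFun s := Sum.elim (fun k => k.1) (fun _ => j) s
  invFun k := if hk : k.val < j.val then .inl ⟨k, hk⟩ else .inr ()
  left_inv := by
    rintro (k | u)
    · dsimp only [Sum.elim_inl]
      rw [dif_pos k.2]
    · dsimp only [Sum.elim_inr]
      rw [dif_neg (lt_irrefl j.val)]
  right_inv := by
    intro k
    dsimp only
    by_cases hk : k.val < j.val
    · rw [dif_pos hk]
      rfl
    · rw [dif_neg hk]
      have := k.isLt
      show j = k
      exact Fin.ext (by omega)

def botEquiv (j : Fin d) (hj : j.val = 0) :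
    Unit ⊕ {k : Fin d // j.val < k.val} ≃ Fin d where
  toFun s := Sum.elim (fun _ => j) (fun k => k.1) s
  invFun k := if hk : j.val < k.val then .inr ⟨k, hk⟩ else .inl ()
  left_inv := by
    rintro (u | k)
    · dsimp only [Sum.elim_inl]
      rw [dif_neg (lt_irrefl j.val)]
    · dsimp only [Sum.elim_inr]
      rw [dif_pos k.2]
  right_inv := by
    intro k
    dsimp only
    by_cases hk : j.val < k.val
    · rw [dif_pos hk]
      rfl
    · rw [dif_neg hk]
      show j = k
      exact Fin.ext (by omega)

lemma prod_top_split {M : Type*} [CommMonoid M] (j : Fin d) (hj : j.val + 1 = d)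
    (g : Fin d → M) :
    ∏ k, g k = (∏ k : {k : Fin d // k.val < j.val}, g k.1) * g j := by
  rw [← Equiv.prod_comp (topEquiv j hj) g, Fintype.prod_sum_type]
  simp [topEquiv]

lemma prod_bot_split {M : Type*} [CommMonoid M] (j : Fin d) (hj : j.val = 0)
    (g : Fin d → M) :
    ∏ k, g k = g j * ∏ k : {k : Fin d // j.val < k.val}, g k.1 := by
  rw [← Equiv.prod_comp (botEquiv j hj) g, Fintype.prod_sum_type]
  simp [botEquiv]

lemma isEmpty_lt0 (j : Fin d) (hj : j.val = 0) : IsEmpty {k : Fin d // k.val < j.val} :=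
  ⟨fun k => by have := k.2; omega⟩

lemma isEmpty_gtLast (j : Fin d) (hj : j.val + 1 = d) :
    IsEmpty {k : Fin d // j.val < k.val} :=
  ⟨fun k => by have := k.1.isLt; have := k.2; omega⟩

lemma Mj_bot (A : ((k : Fin d) → Fin (n k)) → ℝ) (x : (k : Fin d) → Fin (n k) → ℝ)
    (j : Fin d) (hj : j.val = 0) (I : Lt n j) (i : Fin (n j)) (J : Gt n j) :
    Mj A x j i J = A (glue j I i J) := by
  haveI := isEmpty_lt0 (d := d) j hj
  unfold Mj
  simp only [Matrix.of_apply]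
  rw [Fintype.sum_unique]
  rw [Fintype.prod_empty, mul_one]
  have hI : (default : Lt n j) = I := Subsingleton.elim _ _
  rw [hI]

/-- Bridge A: the Frobenius norm of `A_1` is the Frobenius norm of the tensor. -/
lemma frob_base (A : ((k : Fin d) → Fin (n k)) → ℝ) (x : (k : Fin d) → Fin (n k) → ℝ)
    (j : Fin d) (hj : j.val = 0) :
    ∑ i, ∑ J, (Mj A x j i J) ^ 2 = ∑ f, A f ^ 2 := by
  haveI := isEmpty_lt0 (d := d) j hj
  rw [sum_full j,
    Fintype.sum_unique (f := fun I : Lt n j => ∑ i, ∑ J, A (glue j I i J) ^ 2)]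
  apply Finset.sum_congr rfl; intro i _
  apply Finset.sum_congr rfl; intro J _
  rw [Mj_bot A x j hj default i J]

/-- Bridge D: Frobenius norm of `A_{j+1}` as the norm of `A_jᵀ x_j`. -/
lemma frob_succ (A : ((k : Fin d) → Fin (n k)) → ℝ) (x : (k : Fin d) → Fin (n k) → ℝ)
    (j j' : Fin d) (h : j.val + 1 = j'.val) :
    ∑ i', ∑ J', (Mj A x j' i' J') ^ 2 =
      ∑ J : Gt n j, (∑ i, x j i * Mj A x j i J) ^ 2 := by
  rw [sum_gt_split j j' h]
  apply Finset.sum_congr rfl; intro i' _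
  apply Finset.sum_congr rfl; intro J' _
  rw [Mj_succ A x j j' h i' J']

/-- Bridge B: the value of the multilinear form at the algorithm's output. -/
lemma value_last (A : ((k : Fin d) → Fin (n k)) → ℝ) (x : (k : Fin d) → Fin (n k) → ℝ)
    (j : Fin d) (hj : j.val + 1 = d) (J0 : Gt n j) :
    ∑ f, A f * ∏ k, x k (f k) = ∑ i, x j i * Mj A x j i J0 := by
  haveI := isEmpty_gtLast (d := d) j hj
  rw [sum_full j]
  rw [Finset.sum_comm]
  apply Finset.sum_congr rfl
  intro i _
  unfold Mj
  simp only [Matrix.of_apply]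
  rw [Finset.mul_sum]
  apply Finset.sum_congr rfl
  intro I _
  rw [Fintype.sum_unique]
  have hJ : (default : Gt n j) = J0 := Subsingleton.elim _ _
  rw [hJ]
  rw [prod_top_split j hj (fun k => x k (glue j I i J0 k)), glue_self]
  have : ∀ k : {k : Fin d // k.val < j.val}, x k.1 (glue j I i J0 k.1) = x k.1 (I k) := by
    intro k; obtain ⟨k, hk⟩ := k
    rw [glue_lt _ _ _ hk]
  rw [Finset.prod_congr rfl (fun k _ => this k)]
  ring

/-- Bridge C: the multilinear form as a bilinear form in the mode-1 unfolding. -/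
lemma value_bot (A : ((k : Fin d) → Fin (n k)) → ℝ) (x xt : (k : Fin d) → Fin (n k) → ℝ)
    (j : Fin d) (hj : j.val = 0) :
    ∑ f, A f * ∏ k, xt k (f k) =
      ∑ i, ∑ J, xt j i * Mj A x j i J * ∏ k : {k : Fin d // j.val < k.val}, xt k.1 (J k) := by
  haveI := isEmpty_lt0 (d := d) j hj
  rw [sum_full j, Fintype.sum_unique
    (f := fun I : Lt n j => ∑ i, ∑ J, A (glue j I i J) * ∏ k, xt k (glue j I i J k))]
  apply Finset.sum_congr rfl; intro i _
  apply Finset.sum_congr rfl; intro J _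
  rw [Mj_bot A x j hj default i J]
  rw [prod_bot_split j hj (fun k => xt k (glue j default i J k)), glue_self]
  have : ∀ k : {k : Fin d // j.val < k.val}, xt k.1 (glue j default i J k.1) = xt k.1 (J k) := by
    intro k; obtain ⟨k, hk⟩ := k
    rw [glue_gt _ _ _ hk]
  rw [Finset.prod_congr rfl (fun k _ => this k)]
  ring

end Idx3
section Analysis
variable {α : Type*} [Fintype α]

lemma n2_triangle (u v : α → ℝ) : n2 (fun i => u i + v i) ≤ n2 u + n2 v := by
  have hc := cs u v
  have hexp : ∑ i, (u i + v i) ^ 2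
      = (∑ i, u i ^ 2) + 2 * (∑ i, u i * v i) + ∑ i, v i ^ 2 := by
    rw [Finset.mul_sum, ← Finset.sum_add_distrib, ← Finset.sum_add_distrib]
    exact Finset.sum_congr rfl fun i _ => by ring
  have h1 : ∑ i, (u i + v i) ^ 2 ≤ (n2 u + n2 v) ^ 2 := by
    have hu := n2_sq u
    have hv := n2_sq v
    nlinarith [n2_nonneg u, n2_nonneg v]
  calc n2 (fun i => u i + v i) = Real.sqrt (∑ i, (u i + v i) ^ 2) := rfl
    _ ≤ Real.sqrt ((n2 u + n2 v) ^ 2) := Real.sqrt_le_sqrt h1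
    _ = n2 u + n2 v := Real.sqrt_sq (add_nonneg (n2_nonneg u) (n2_nonneg v))

variable {ω : ℝ}

lemma st_term_abs (a : ℝ) (hω : 0 ≤ ω) :
    |Real.sign a * max (|a| - ω) 0| = max (|a| - ω) 0 := by
  rcases lt_trichotomy a 0 with h | h | h
  · rw [Real.sign_of_neg h, abs_mul, abs_neg, abs_one, one_mul,
      abs_of_nonneg (le_max_right _ _)]
  · subst h
    simp only [Real.sign_zero, zero_mul, abs_zero, abs_zero, zero_sub]
    rw [max_eq_right (by simpa using hω)]
  · rw [Real.sign_of_pos h, abs_mul, abs_one, one_mul,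
      abs_of_nonneg (le_max_right _ _)]

lemma st_term_mul (a : ℝ) (hω : 0 ≤ ω) :
    Real.sign a * max (|a| - ω) 0 * a
      = max (|a| - ω) 0 ^ 2 + ω * max (|a| - ω) 0 := by
  rcases eq_or_ne a 0 with h | h
  · subst h
    rw [max_eq_right (by simpa using hω)]
    simp
  · have hsa : Real.sign a * a = |a| := by
      rcases lt_trichotomy a 0 with h2 | h2 | h2
      · rw [Real.sign_of_neg h2, abs_of_neg h2]; ring
      · exact absurd h2 h
      · rw [Real.sign_of_pos h2, abs_of_pos h2]; ring
    have : Real.sign a * max (|a| - ω) 0 * a = max (|a| - ω) 0 * |a| := by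
      rw [← hsa]; ring
    rw [this]
    rcases le_or_gt ω |a| with h2 | h2
    · rw [max_eq_left (by linarith)]; ring
    · rw [max_eq_right (by linarith)]; ring

lemma st_term_diff (a : ℝ) (hω : 0 ≤ ω) :
    |a - Real.sign a * max (|a| - ω) 0| ≤ ω := by
  rcases lt_trichotomy a 0 with h | h | h
  · rw [Real.sign_of_neg h]
    rcases le_or_gt ω |a| with h2 | h2
    · rw [max_eq_left (by linarith), abs_of_neg h]
      rw [show a - -1 * (-a - ω) = -ω by ring, abs_neg, abs_of_nonneg hω]
    · rw [max_eq_right (by linarith)]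
      rw [abs_of_neg h] at h2
      rw [show a - -1 * 0 = a by ring, abs_of_neg h]
      linarith
  · subst h
    simp only [Real.sign_zero, zero_mul, abs_zero, zero_sub, sub_zero]
    exact hω
  · rw [Real.sign_of_pos h]
    rcases le_or_gt ω |a| with h2 | h2
    · rw [max_eq_left (by linarith), abs_of_pos h]
      rw [show a - 1 * (a - ω) = ω by ring, abs_of_nonneg hω]
    · rw [max_eq_right (by linarith)]
      rw [abs_of_pos h] at h2
      rw [show a - 1 * 0 = a by ring, abs_of_pos h]
      linarith

lemma st_inner (a : α → ℝ) (hω : 0 ≤ ω) :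
    ∑ i, st a ω i * a i = (∑ i, st a ω i ^ 2) + ω * ∑ i, |st a ω i| := by
  rw [Finset.mul_sum, ← Finset.sum_add_distrib]
  apply Finset.sum_congr rfl
  intro i _
  rw [st, st_term_abs (a i) hω]
  have h2 : (Real.sign (a i) * max (|a i| - ω) 0) ^ 2 = max (|a i| - ω) 0 ^ 2 := by
    rw [← sq_abs, st_term_abs (a i) hω]
  rw [h2]
  exact st_term_mul (a i) hω

/-- The soft-thresholding bound: the normalized thresholded vector stays close to a unit
vector. -/
lemma soft_bound (xs : α → ℝ) (hxs : n2 xs = 1) (hω0 : 0 ≤ ω)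
    (hωn : ω * Real.sqrt (Fintype.card α) < 1) :
    0 < n2 (st xs ω) ∧
      1 - ω * Real.sqrt (Fintype.card α) + ω
        ≤ ∑ i, (st xs ω i / n2 (st xs ω)) * xs i := by
  set s := st xs ω with hs
  set N := n2 s with hN
  set c := Real.sqrt (Fintype.card α) with hc
  have hdiff : n2 (fun i => xs i - s i) ≤ ω * c := by
    have h1 : ∑ i, (xs i - s i) ^ 2 ≤ ∑ i : α, ω ^ 2 := by
      apply Finset.sum_le_sum
      intro i _
      have h2 : |xs i - s i| ≤ ω := st_term_diff (xs i) hω0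
      calc (xs i - s i) ^ 2 = |xs i - s i| ^ 2 := (sq_abs _).symm
        _ ≤ ω ^ 2 := by nlinarith [abs_nonneg (xs i - s i)]
    calc n2 (fun i => xs i - s i) ≤ Real.sqrt (∑ i : α, ω ^ 2) := Real.sqrt_le_sqrt h1
      _ = Real.sqrt ((Fintype.card α : ℝ) * ω ^ 2) := by
          rw [Finset.sum_const, Finset.card_univ, nsmul_eq_mul]
      _ = ω * c := by
          rw [Real.sqrt_mul (Nat.cast_nonneg _), Real.sqrt_sq hω0, mul_comm]
  have hNlb : 1 - ω * c ≤ N := by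
    have := n2_triangle (fun i => xs i - s i) s
    have h2 : n2 (fun i => (xs i - s i) + s i) = 1 := by
      simpa using hxs
    linarith
  have hNpos : 0 < N := by linarith
  refine ⟨hNpos, ?_⟩
  have hinner : ∑ i, s i * xs i = N ^ 2 + ω * n1 s := by
    rw [hN, n2_sq, n1, hs]
    exact st_inner xs hω0
  have hn1 : N ≤ n1 s := n2_le_n1 s
  have key : ∑ i, (s i / N) * xs i = N + ω * (n1 s / N) := by
    rw [show ∑ i, s i / N * xs i = (∑ i, s i * xs i) / N by
      rw [Finset.sum_div]; exact Finset.sum_congr rfl fun i _ => by ring]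
    rw [hinner]
    field_simp
  rw [key]
  have : 1 ≤ n1 s / N := (one_le_div hNpos).mpr hn1
  nlinarith

end Analysis

section Step
variable {αr β : Type*} [Fintype αr] [Fintype β]

lemma mulVec_apply (M : Matrix αr β ℝ) (v : β → ℝ) (i : αr) :
    M.mulVec v i = ∑ b, M i b * v b := rfl

/-- The per-step bound of the algorithm. -/
lemma step_bound (M : Matrix αr β ℝ) (ω : ℝ) (hω0 : 0 ≤ ω)
    (hωn : ω * Real.sqrt (Fintype.card αr) < 1)
    (kbar : αr) (hkbar : ∀ k, n2 (M k) ≤ n2 (M kbar))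
    (xs : αr → ℝ)
    (hxs : xs = fun i => M.mulVec (M kbar) i / n2 (M.mulVec (M kbar)))
    (xω : αr → ℝ)
    (hxω : xω = fun i => st xs ω i / n2 (st xs ω)) :
    (1 - ω * Real.sqrt (Fintype.card αr) + ω) / Real.sqrt (Fintype.card αr)
        * Real.sqrt (∑ i, ∑ b, M i b ^ 2)
      ≤ n2 (fun b => ∑ i, xω i * M i b) := by
  set c := Real.sqrt (Fintype.card αr) with hcdef
  set γ := 1 - ω * c + ω with hγdef
  have hcard : 0 < Fintype.card αr := Fintype.card_pos_iff.mpr ⟨kbar⟩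
  have hc0 : 0 < c := Real.sqrt_pos.mpr (by positivity)
  have hγ0 : 0 < γ := by
    have : 1 ≤ c := by
      rw [hcdef, show (1:ℝ) = Real.sqrt 1 by simp]
      apply Real.sqrt_le_sqrt
      exact_mod_cast hcard
    nlinarith
  have hT0 : 0 ≤ n2 (fun b => ∑ i, xω i * M i b) := n2_nonneg _
  -- relate Frobenius to row norms
  have hrow : ∀ i, (n2 (M i)) ^ 2 = ∑ b, M i b ^ 2 := fun i => n2_sq (M i)
  by_cases hzero : n2 (M kbar) = 0
  · have hz : ∀ i b, M i b = 0 := by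
      intro i b
      have h1 : n2 (M i) = 0 := le_antisymm (hzero ▸ hkbar i) (n2_nonneg _)
      have := n2_eq_zero.mp h1
      exact congrFun this b
    have : ∑ i, ∑ b, M i b ^ 2 = 0 := by
      simp [hz]
    rw [this, Real.sqrt_zero, mul_zero]
    exact hT0
  · have hkpos : 0 < n2 (M kbar) := lt_of_le_of_ne (n2_nonneg _) (Ne.symm hzero)
    set w := M.mulVec (M kbar) with hw
    have hwk : w kbar = n2 (M kbar) ^ 2 := by
      rw [hw, mulVec_apply, n2_sq]
      exact Finset.sum_congr rfl fun b _ => by ring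
    have hwn : n2 (M kbar) ^ 2 ≤ n2 w := by
      rw [← hwk]
      calc w kbar ≤ |w kbar| := le_abs_self _
        _ ≤ n2 w := abs_le_n2 w kbar
    have hwpos : 0 < n2 w := lt_of_lt_of_le (by positivity) hwn
    have hxs1 : n2 xs = 1 := by
      rw [hxs]
      have : (fun i => w i / n2 w) = fun i => (n2 w)⁻¹ * w i := by
        funext i; rw [inv_mul_eq_div]
      rw [this, n2_smul, abs_of_pos (inv_pos.mpr hwpos), inv_mul_cancel₀ (ne_of_gt hwpos)]
    obtain ⟨hNpos, hip⟩ := soft_bound xs hxs1 hω0 hωn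
    have hip' : γ ≤ ∑ i, xω i * xs i := by
      rw [hxω]; exact hip
    -- Cauchy–Schwarz step
    have hswap : ∑ b, (∑ i, xω i * M i b) * M kbar b = ∑ i, xω i * w i := by
      calc ∑ b, (∑ i, xω i * M i b) * M kbar b
          = ∑ b, ∑ i, xω i * M i b * M kbar b := by
            apply Finset.sum_congr rfl; intro b _; rw [Finset.sum_mul]
        _ = ∑ i, ∑ b, xω i * M i b * M kbar b := Finset.sum_comm
        _ = ∑ i, xω i * w i := by
            apply Finset.sum_congr rfl; intro i _
            rw [hw, mulVec_apply, Finset.mul_sum]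
            exact Finset.sum_congr rfl fun b _ => by ring
    have hwxs : ∀ i, w i = n2 w * xs i := by
      intro i; rw [hxs]; field_simp
    have h3 : ∑ i, xω i * w i = n2 w * ∑ i, xω i * xs i := by
      rw [Finset.mul_sum]
      exact Finset.sum_congr rfl fun i _ => by rw [hwxs i]; ring
    have hCS : ∑ b, (∑ i, xω i * M i b) * M kbar b
        ≤ n2 (fun b => ∑ i, xω i * M i b) * n2 (M kbar) :=
      cs (fun b => ∑ i, xω i * M i b) (M kbar)
    have h4 : γ * n2 w ≤ n2 (fun b => ∑ i, xω i * M i b) * n2 (M kbar) := by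
      calc γ * n2 w ≤ (∑ i, xω i * xs i) * n2 w := by nlinarith
        _ = ∑ i, xω i * w i := by rw [h3]; ring
        _ = ∑ b, (∑ i, xω i * M i b) * M kbar b := hswap.symm
        _ ≤ _ := hCS
    have h5 : γ * n2 (M kbar) ≤ n2 (fun b => ∑ i, xω i * M i b) := by
      nlinarith [mul_le_mul_of_nonneg_left hwn (le_of_lt hγ0)]
    have h6 : Real.sqrt (∑ i, ∑ b, M i b ^ 2) ≤ c * n2 (M kbar) := by
      have hb : ∑ i, ∑ b, M i b ^ 2 ≤ (Fintype.card αr : ℝ) * n2 (M kbar) ^ 2 := by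
        calc ∑ i, ∑ b, M i b ^ 2 = ∑ i, n2 (M i) ^ 2 :=
              (Finset.sum_congr rfl fun i _ => (hrow i)).symm
          _ ≤ ∑ _i : αr, n2 (M kbar) ^ 2 :=
              Finset.sum_le_sum fun i _ => pow_le_pow_left₀ (n2_nonneg _) (hkbar i) 2
          _ = (Fintype.card αr : ℝ) * n2 (M kbar) ^ 2 := by
              rw [Finset.sum_const, Finset.card_univ, nsmul_eq_mul]
      calc Real.sqrt (∑ i, ∑ b, M i b ^ 2)
          ≤ Real.sqrt ((Fintype.card αr : ℝ) * n2 (M kbar) ^ 2) := Real.sqrt_le_sqrt hb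
        _ = c * n2 (M kbar) := by
            rw [Real.sqrt_mul (Nat.cast_nonneg _), Real.sqrt_sq (n2_nonneg _)]
    calc γ / c * Real.sqrt (∑ i, ∑ b, M i b ^ 2)
        ≤ γ / c * (c * n2 (M kbar)) := by
          apply mul_le_mul_of_nonneg_left h6 (by positivity)
      _ = γ * n2 (M kbar) := by field_simp
      _ ≤ _ := h5

end Step
lemma sqrt_prod {ι : Type*} (S : Finset ι) (f : ι → ℝ) (hf : ∀ i ∈ S, 0 ≤ f i) :
    Real.sqrt (∏ i ∈ S, f i) = ∏ i ∈ S, Real.sqrt (f i) := by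
  induction S using Finset.cons_induction with
  | empty => simp
  | cons a S ha ih =>
    rw [Finset.prod_cons, Finset.prod_cons,
      Real.sqrt_mul (hf a (Finset.mem_cons_self a S)),
      ih (fun i hi => hf i (Finset.mem_cons_of_mem hi))]


/-- Approximation bound for the max-row-based Algorithm V2. -/
theorem stmt19 {d : ℕ} (hd : 3 ≤ d) (n : Fin d → ℕ)
    (A : ((k : Fin d) → Fin (n k)) → ℝ) (ω : Fin d → ℝ)
    (hω0 : ∀ j, 0 ≤ ω j) (hω : ∀ j, ω j < 1 / Real.sqrt (n j))
    (x xs : (k : Fin d) → Fin (n k) → ℝ)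
    -- steps 1 and 2 of Algorithm V2 (matrices A_1, …, A_{d-1}; 0-based j = 0, …, d-2):
    -- xs j = A_j y_j / ‖A_j y_j‖ where y_j is the transpose of a row of A_j of maximal
    -- norm, and x j = N(xs j, ω j) is its soft-thresholded normalization
    (hstep : ∀ j : Fin d, j.val < d - 1 →
      ∃ kbar : Fin (n j),
        (∀ k, n2 (Mj A x j k) ≤ n2 (Mj A x j kbar)) ∧
        xs j = (fun i => (Mj A x j).mulVec (Mj A x j kbar) i /
          n2 ((Mj A x j).mulVec (Mj A x j kbar))) ∧
        x j = fun i => st (xs j) (ω j) i / n2 (st (xs j) (ω j)))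
    -- step 3: for the last mode, xs j = A_{d-1}ᵀ x_{d-1}^ω / ‖·‖ and x j = N(xs j, ω j)
    (hlast : ∀ j : Fin d, ∀ hj : j.val = d - 1,
      ∃ v : Fin (n j) → ℝ,
        (∀ i, v i = Mj A x j i (fun k => absurd k.2 (by have := k.1.isLt; omega))) ∧
        xs j = (fun i => v i / n2 v) ∧
        x j = fun i => st (xs j) (ω j) i / n2 (st (xs j) (ω j)))
    -- lam1 is the largest singular value of the mode-1 unfolding A₁ of the tensor A
    (lam1 : ℝ)
    (hlam1 : IsGreatest {v : ℝ |
      ∃ (u : Fin (n ⟨0, by omega⟩) → ℝ) (w : Gt n ⟨0, by omega⟩ → ℝ),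
        n2 u = 1 ∧ n2 w = 1 ∧
        v = ∑ i, ∑ J, u i * Mj A x ⟨0, by omega⟩ i J * w J} lam1) :
    ((∏ j, (1 - ω j * Real.sqrt (n j) + ω j)) /
        Real.sqrt (∏ j ∈ Finset.univ.filter (fun j : Fin d => j.val ≤ d - 2),
          ((n j : ℝ)))) * Real.sqrt (∑ J, A J ^ 2)
      ≤ ∑ J, A J * ∏ k, x k (J k) ∧
    ((∏ j, (1 - ω j * Real.sqrt (n j) + ω j)) /
        Real.sqrt (∏ j ∈ Finset.univ.filter (fun j : Fin d => j.val ≤ d - 2),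
          ((n j : ℝ)))) * lam1
      ≤ ((∏ j, (1 - ω j * Real.sqrt (n j) + ω j)) /
        Real.sqrt (∏ j ∈ Finset.univ.filter (fun j : Fin d => j.val ≤ d - 2),
          ((n j : ℝ)))) * Real.sqrt (∑ J, A J ^ 2) ∧
    ∀ xt : (k : Fin d) → Fin (n k) → ℝ, (∀ k, n2 (xt k) = 1) →
      ((∏ j, (1 - ω j * Real.sqrt (n j) + ω j)) /
        Real.sqrt (∏ j ∈ Finset.univ.filter (fun j : Fin d => j.val ≤ d - 2),
          ((n j : ℝ)))) * (∑ J, A J * ∏ k, xt k (J k))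
      ≤ ((∏ j, (1 - ω j * Real.sqrt (n j) + ω j)) /
        Real.sqrt (∏ j ∈ Finset.univ.filter (fun j : Fin d => j.val ≤ d - 2),
          ((n j : ℝ)))) * lam1 := by

  -- basic facts about the dimensions and thresholds
  have hn1 : ∀ j, 1 ≤ n j := by
    intro j
    by_contra hcon
    have h0 : n j = 0 := by omega
    have := hω j
    rw [h0] at this
    simp at this
    exact absurd this (not_lt.mpr (hω0 j))
  have hsq1 : ∀ j, (1 : ℝ) ≤ Real.sqrt (n j) := by
    intro j
    rw [show (1:ℝ) = Real.sqrt 1 by simp]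
    apply Real.sqrt_le_sqrt
    exact_mod_cast hn1 j
  have hωn : ∀ j, ω j * Real.sqrt (n j) < 1 := by
    intro j
    have h1 : 0 < Real.sqrt (n j) := lt_of_lt_of_le one_pos (hsq1 j)
    have := hω j
    rw [div_eq_inv_mul, mul_one] at this
    calc ω j * Real.sqrt (n j) < (Real.sqrt (n j))⁻¹ * Real.sqrt (n j) := by
          apply mul_lt_mul_of_pos_right this h1
      _ = 1 := inv_mul_cancel₀ (ne_of_gt h1)
  have hcpos : ∀ j, 0 < 1 - ω j * Real.sqrt (n j) + ω j := by
    intro j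
    have := hωn j
    have := hω0 j
    linarith
  -- the main induction: Frobenius norms of the successive matrices
  have key : ∀ t : ℕ, t ≤ d - 1 → ∀ j : Fin d, j.val = t →
      (∏ k ∈ Finset.univ.filter (fun k : Fin d => k.val < t),
          ((1 - ω k * Real.sqrt (n k) + ω k) / Real.sqrt (n k)))
          * Real.sqrt (∑ f, A f ^ 2)
        ≤ Real.sqrt (∑ i, ∑ J, (Mj A x j i J) ^ 2) := by
    intro t
    induction t with
    | zero =>
      intro _ j hj
      have he : Finset.univ.filter (fun k : Fin d => k.val < 0) = ∅ := by
        apply Finset.filter_false_of_mem; intro k _; omega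
      rw [he, Finset.prod_empty, one_mul, frob_base A x j hj]
    | succ t ih =>
      intro ht j' hj'
      have htd : t < d - 1 := by omega
      set j : Fin d := ⟨t, by omega⟩ with hjdef
      have hjj' : j.val + 1 = j'.val := by rw [hj']
      obtain ⟨kbar, hkbar, hxsj, hxj⟩ := hstep j (show t < d - 1 by omega)
      have hsb := step_bound (Mj A x j) (ω j) (hω0 j)
        (by simpa [Fintype.card_fin] using hωn j) kbar hkbar (xs j) hxsj (x j) hxj
      simp only [Fintype.card_fin] at hsb
      have hfr : n2 (fun b : Gt n j => ∑ i, x j i * Mj A x j i b)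
          = Real.sqrt (∑ i', ∑ J', (Mj A x j' i' J') ^ 2) := by
        rw [frob_succ A x j j' hjj']
        rfl
      rw [hfr] at hsb
      -- splitting the product over `k < t+1`
      have hnotmem : j ∉ Finset.univ.filter (fun k : Fin d => k.val < t) := by
        simp [hjdef]
      have hfilter : Finset.univ.filter (fun k : Fin d => k.val < t + 1)
          = insert j (Finset.univ.filter (fun k : Fin d => k.val < t)) := by
        ext k
        simp only [Finset.mem_filter, Finset.mem_insert, Finset.mem_univ, true_and]
        constructor
        · intro hk
          rcases Nat.lt_or_ge k.val t with h2 | h2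
          · exact Or.inr h2
          · exact Or.inl (Fin.ext (by omega))
        · rintro (rfl | hk) <;> omega
      have hdivpos : 0 < (1 - ω j * Real.sqrt (n j) + ω j) / Real.sqrt (n j) :=
        div_pos (hcpos j) (lt_of_lt_of_le one_pos (hsq1 j))
      calc (∏ k ∈ Finset.univ.filter (fun k : Fin d => k.val < t + 1),
              ((1 - ω k * Real.sqrt (n k) + ω k) / Real.sqrt (n k)))
              * Real.sqrt (∑ f, A f ^ 2)
          = ((1 - ω j * Real.sqrt (n j) + ω j) / Real.sqrt (n j)) *
              ((∏ k ∈ Finset.univ.filter (fun k : Fin d => k.val < t),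
                ((1 - ω k * Real.sqrt (n k) + ω k) / Real.sqrt (n k)))
                * Real.sqrt (∑ f, A f ^ 2)) := by
            rw [hfilter, Finset.prod_insert hnotmem]; ring
        _ ≤ ((1 - ω j * Real.sqrt (n j) + ω j) / Real.sqrt (n j)) *
              Real.sqrt (∑ i, ∑ J, (Mj A x j i J) ^ 2) := by
            exact mul_le_mul_of_nonneg_left (ih (by omega) j rfl) (le_of_lt hdivpos)
        _ ≤ Real.sqrt (∑ i', ∑ J', (Mj A x j' i' J') ^ 2) := hsb
  -- last mode
  set jl : Fin d := ⟨d - 1, by omega⟩ with hjl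
  obtain ⟨v, hv, hxsl, hxl⟩ := hlast jl (show d - 1 = d - 1 from rfl)
  haveI hGe : IsEmpty {k : Fin d // jl.val < k.val} :=
    isEmpty_gtLast jl (show d - 1 + 1 = d by omega)
  set J0 : Gt n jl := (fun k => absurd k.2 (by
    have := k.1.isLt
    have hj : (jl : ℕ) = d - 1 := rfl
    omega)) with hJ0
  have hvJ0 : ∀ i, v i = Mj A x jl i J0 := hv
  have hval : ∑ f, A f * ∏ k, x k (f k) = ∑ i, x jl i * v i := by
    rw [value_last A x jl (show d - 1 + 1 = d by omega) J0]
    exact Finset.sum_congr rfl fun i _ => by rw [hvJ0 i]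
  have hn2v : n2 v = Real.sqrt (∑ i, ∑ J : Gt n jl, (Mj A x jl i J) ^ 2) := by
    have hinner : ∀ i : Fin (n jl), ∑ J : Gt n jl, (Mj A x jl i J) ^ 2 = v i ^ 2 := by
      intro i
      rw [Fintype.sum_unique (f := fun J : Gt n jl => (Mj A x jl i J) ^ 2), hvJ0 i]
      exact congrArg (fun J => Mj A x jl i J ^ 2) (Subsingleton.elim _ _)
    rw [show n2 v = Real.sqrt (∑ i, v i ^ 2) from rfl]
    congr 1
    exact (Finset.sum_congr rfl fun i _ => hinner i).symm
  have hlaststep : (1 - ω jl * Real.sqrt (n jl) + ω jl) * n2 v ≤ ∑ i, x jl i * v i := by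
    by_cases hv0 : n2 v = 0
    · have hveq : v = 0 := n2_eq_zero.mp hv0
      have hz : ∑ i, x jl i * v i = 0 := by rw [hveq]; simp
      rw [hv0, mul_zero, hz]
    · have hvpos : 0 < n2 v := lt_of_le_of_ne (n2_nonneg v) (Ne.symm hv0)
      have hxs1 : n2 (xs jl) = 1 := by
        rw [hxsl]
        have heq : (fun i => v i / n2 v) = fun i => (n2 v)⁻¹ * v i := by
          funext i; rw [inv_mul_eq_div]
        rw [heq, n2_smul, abs_of_pos (inv_pos.mpr hvpos), inv_mul_cancel₀ (ne_of_gt hvpos)]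
      obtain ⟨hN, hip⟩ := soft_bound (xs jl) hxs1 (hω0 jl)
        (by simpa [Fintype.card_fin] using hωn jl)
      simp only [Fintype.card_fin] at hip
      have hip' : 1 - ω jl * Real.sqrt (n jl) + ω jl ≤ ∑ i, x jl i * xs jl i := by
        rw [hxl]; simpa using hip
      have hvi : ∀ i, v i = n2 v * xs jl i := by
        intro i; rw [hxsl]; field_simp
      calc (1 - ω jl * Real.sqrt (n jl) + ω jl) * n2 v
          ≤ (∑ i, x jl i * xs jl i) * n2 v := mul_le_mul_of_nonneg_right hip' (n2_nonneg v)
        _ = ∑ i, x jl i * v i := by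
            rw [Finset.sum_mul]
            exact Finset.sum_congr rfl fun i _ => by rw [hvi i]; ring
  -- the constant rewritten
  have hSet : Finset.univ.filter (fun k : Fin d => k.val < d - 1)
      = Finset.univ.filter (fun k : Fin d => k.val ≤ d - 2) := by
    ext k; simp only [Finset.mem_filter, Finset.mem_univ, true_and]; omega
  have hnotmem2 : jl ∉ Finset.univ.filter (fun k : Fin d => k.val ≤ d - 2) := by
    simp only [Finset.mem_filter, Finset.mem_univ, true_and, hjl]
    omega
  have huniv : (Finset.univ : Finset (Fin d))
      = insert jl (Finset.univ.filter (fun k : Fin d => k.val ≤ d - 2)) := by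
    ext k
    simp only [Finset.mem_insert, Finset.mem_filter, Finset.mem_univ, true_and, true_iff]
    rcases Nat.lt_or_ge k.val (d - 1) with h2 | h2
    · exact Or.inr (by omega)
    · exact Or.inl (Fin.ext (show k.val = d - 1 from by have := k.isLt; omega))
  have hCalt : (∏ j, (1 - ω j * Real.sqrt (n j) + ω j)) /
      Real.sqrt (∏ j ∈ Finset.univ.filter (fun j : Fin d => j.val ≤ d - 2), ((n j : ℝ)))
      = (1 - ω jl * Real.sqrt (n jl) + ω jl) *
        ∏ k ∈ Finset.univ.filter (fun k : Fin d => k.val < d - 1),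
          ((1 - ω k * Real.sqrt (n k) + ω k) / Real.sqrt (n k)) := by
    rw [hSet, Finset.prod_div_distrib,
      ← sqrt_prod _ _ (fun i _ => Nat.cast_nonneg (n i))]
    rw [show (∏ j, (1 - ω j * Real.sqrt (n j) + ω j))
        = (1 - ω jl * Real.sqrt (n jl) + ω jl) *
          ∏ k ∈ Finset.univ.filter (fun k : Fin d => k.val ≤ d - 2),
            (1 - ω k * Real.sqrt (n k) + ω k) by
      conv_lhs => rw [huniv]
      rw [Finset.prod_insert hnotmem2]]
    rw [mul_div_assoc]
  have hC0 : 0 ≤ (∏ j, (1 - ω j * Real.sqrt (n j) + ω j)) /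
      Real.sqrt (∏ j ∈ Finset.univ.filter (fun j : Fin d => j.val ≤ d - 2), ((n j : ℝ))) :=
    div_nonneg (Finset.prod_nonneg fun k _ => le_of_lt (hcpos k)) (Real.sqrt_nonneg _)
  -- Part 1
  have part1 : (∏ j, (1 - ω j * Real.sqrt (n j) + ω j)) /
      Real.sqrt (∏ j ∈ Finset.univ.filter (fun j : Fin d => j.val ≤ d - 2), ((n j : ℝ)))
      * Real.sqrt (∑ J, A J ^ 2) ≤ ∑ J, A J * ∏ k, x k (J k) := by
    rw [hCalt, hval]
    calc (1 - ω jl * Real.sqrt (n jl) + ω jl) *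
          (∏ k ∈ Finset.univ.filter (fun k : Fin d => k.val < d - 1),
            ((1 - ω k * Real.sqrt (n k) + ω k) / Real.sqrt (n k)))
          * Real.sqrt (∑ J, A J ^ 2)
        = (1 - ω jl * Real.sqrt (n jl) + ω jl) *
          ((∏ k ∈ Finset.univ.filter (fun k : Fin d => k.val < d - 1),
            ((1 - ω k * Real.sqrt (n k) + ω k) / Real.sqrt (n k)))
            * Real.sqrt (∑ J, A J ^ 2)) := by ring
      _ ≤ (1 - ω jl * Real.sqrt (n jl) + ω jl) *
          Real.sqrt (∑ i, ∑ J, (Mj A x jl i J) ^ 2) :=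
          mul_le_mul_of_nonneg_left (key (d - 1) le_rfl jl rfl) (le_of_lt (hcpos jl))
      _ = (1 - ω jl * Real.sqrt (n jl) + ω jl) * n2 v := by rw [hn2v]
      _ ≤ ∑ i, x jl i * v i := hlaststep
  -- Part 2: lam1 ≤ Frobenius norm
  have part2aux : ∀ (j0 : Fin d), j0.val = 0 → ∀ (u : Fin (n j0) → ℝ) (w : Gt n j0 → ℝ),
      n2 u = 1 → n2 w = 1 →
      ∑ i, ∑ J, u i * Mj A x j0 i J * w J ≤ Real.sqrt (∑ f, A f ^ 2) := by
    intro j0 hj0 u w hu hw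
    have hu2 : ∑ i, u i ^ 2 = 1 := by
      have := n2_sq u; rw [hu, one_pow] at this; exact this.symm
    have hw2 : ∑ J, w J ^ 2 = 1 := by
      have := n2_sq w; rw [hw, one_pow] at this; exact this.symm
    have hprod : n2 (fun p : Fin (n j0) × Gt n j0 => u p.1 * w p.2) = 1 := by
      have hsum : ∑ p : Fin (n j0) × Gt n j0, (u p.1 * w p.2) ^ 2 = 1 := by
        rw [Fintype.sum_prod_type]
        have h3 : ∀ i, ∑ J, (u i * w J) ^ 2 = u i ^ 2 * ∑ J, w J ^ 2 := by
          intro i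
          rw [Finset.mul_sum]
          exact Finset.sum_congr rfl fun J _ => by ring
        rw [Finset.sum_congr rfl (fun i _ => h3 i), ← Finset.sum_mul, hu2, hw2, one_mul]
      rw [show n2 (fun p : Fin (n j0) × Gt n j0 => u p.1 * w p.2)
          = Real.sqrt (∑ p : Fin (n j0) × Gt n j0, (u p.1 * w p.2) ^ 2) from rfl,
        hsum, Real.sqrt_one]
    have hfro : n2 (fun p : Fin (n j0) × Gt n j0 => Mj A x j0 p.1 p.2)
        = Real.sqrt (∑ f, A f ^ 2) := by
      rw [show n2 (fun p : Fin (n j0) × Gt n j0 => Mj A x j0 p.1 p.2)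
          = Real.sqrt (∑ p : Fin (n j0) × Gt n j0, (Mj A x j0 p.1 p.2) ^ 2) from rfl,
        Fintype.sum_prod_type, frob_base A x j0 hj0]
    calc ∑ i, ∑ J, u i * Mj A x j0 i J * w J
        = ∑ p : Fin (n j0) × Gt n j0, (u p.1 * w p.2) * Mj A x j0 p.1 p.2 := by
          rw [Fintype.sum_prod_type]
          exact Finset.sum_congr rfl fun i _ => Finset.sum_congr rfl fun J _ => by ring
      _ ≤ n2 (fun p : Fin (n j0) × Gt n j0 => u p.1 * w p.2) *
            n2 (fun p : Fin (n j0) × Gt n j0 => Mj A x j0 p.1 p.2) := cs _ _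
      _ = Real.sqrt (∑ f, A f ^ 2) := by rw [hprod, hfro, one_mul]
  have hlam_le : lam1 ≤ Real.sqrt (∑ J, A J ^ 2) := by
    obtain ⟨u, w, hu, hw, hveq⟩ := hlam1.1
    rw [hveq]
    exact part2aux _ rfl u w hu hw
  refine ⟨part1, mul_le_mul_of_nonneg_left hlam_le hC0, ?_⟩
  -- Part 3
  intro xt hxt
  apply mul_le_mul_of_nonneg_left _ hC0
  apply hlam1.2
  refine ⟨xt ⟨0, by omega⟩,
    (fun J => ∏ k : {k : Fin d // (⟨0, by omega⟩ : Fin d).val < k.val}, xt k.1 (J k)),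
    hxt _, ?_, ?_⟩
  · -- n2 of the tail product is 1
    have hsum : ∑ J : Gt n ⟨0, by omega⟩,
        (∏ k : {k : Fin d // (⟨0, by omega⟩ : Fin d).val < k.val}, xt k.1 (J k)) ^ 2 = 1 := by
      have h1 : ∀ J : Gt n ⟨0, by omega⟩,
          (∏ k : {k : Fin d // (⟨0, by omega⟩ : Fin d).val < k.val}, xt k.1 (J k)) ^ 2
          = ∏ k : {k : Fin d // (⟨0, by omega⟩ : Fin d).val < k.val}, (xt k.1 (J k)) ^ 2 := by
        intro J
        rw [← Finset.prod_pow]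
      rw [Finset.sum_congr rfl (fun J _ => h1 J)]
      have hps := Finset.prod_univ_sum
        (fun k : {k : Fin d // (⟨0, by omega⟩ : Fin d).val < k.val} =>
          (Finset.univ : Finset (Fin (n k.1))))
        (fun k i => xt k.1 i ^ 2)
      rw [Fintype.piFinset_univ] at hps
      rw [← hps]
      have h2 : ∀ k : {k : Fin d // (⟨0, by omega⟩ : Fin d).val < k.val},
          ∑ i, (xt k.1 i) ^ 2 = 1 := by
        intro k
        have := n2_sq (xt k.1); rw [hxt k.1, one_pow] at this; exact this.symm
      rw [Finset.prod_congr rfl (fun k _ => h2 k), Finset.prod_const_one]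
    rw [show n2 (fun J : Gt n ⟨0, by omega⟩ =>
        ∏ k : {k : Fin d // (⟨0, by omega⟩ : Fin d).val < k.val}, xt k.1 (J k))
        = Real.sqrt (∑ J : Gt n ⟨0, by omega⟩,
          (∏ k : {k : Fin d // (⟨0, by omega⟩ : Fin d).val < k.val}, xt k.1 (J k)) ^ 2)
        from rfl, hsum, Real.sqrt_one]
  · exact value_bot A x xt ⟨0, by omega⟩ rfl
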